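/- Let M_p and M̂ be matrices and Δ = M̂ − M_p. Let P_U, P_V be the orthogonal projections onto the column and row spaces of M_p, and set Δ'' = (I − P_U)Δ(I − P_V), Δ' = Δ − Δ''. Then ‖M̂‖* ≥ ‖M_p‖* + ‖Δ''‖* − ‖Δ'‖*, where ‖·‖* is the nuclear norm. -/

import Mathlib

/-!
Write `M = M_p + Δ'' = M̂ - Δ'`. Since `P_U M_p = M_p = M_p P_V` and `P_U Δ'' = 0 = Δ'' P_V`,
pinching by the projections, `M ↦ (P_U M P_V, (I - P_U) M (I - P_V))`, sends `M` to `(M_p, Δ'')`.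
Pinching does not increase the nuclear norm: it maps a rank-one term `a bᵀ` of a decomposition of
`M` to the two terms `(P_U a)(P_V b)ᵀ` and `((I - P_U) a)((I - P_V) b)ᵀ`, whose costs add up to at
most `‖a‖ ‖b‖` by Pythagoras and Cauchy–Schwarz. Hence
`‖M_p‖* + ‖Δ''‖* ≤ ‖M‖* ≤ ‖M̂‖* + ‖Δ'‖*` by the triangle inequality.
-/

open Matrix

noncomputable def nuclearNorm {m n : Type*} [Fintype m] [Fintype n] (A : Matrix m n ℝ) : ℝ :=
  sInf { s | ∃ (R : ℕ) (a : Fin R → m → ℝ) (b : Fin R → n → ℝ),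
    A = ∑ r, Matrix.of (fun i j => a r i * b r j) ∧
    s = ∑ r, Real.sqrt (∑ i, a r i ^ 2) * Real.sqrt (∑ j, b r j ^ 2) }

theorem Real.sqrt_mul_sqrt_add_sqrt_mul_sqrt_le {x y u v : ℝ} (hx : 0 ≤ x) (hy : 0 ≤ y)
    (hu : 0 ≤ u) (hv : 0 ≤ v) : √x * √u + √y * √v ≤ √(x + y) * √(u + v) := by
  simpa [Fin.sum_univ_two] using
    Real.sum_sqrt_mul_sqrt_le Finset.univ (f := ![x, y]) (g := ![u, v])
      (by simp [Fin.forall_fin_two, hx, hy]) (by simp [Fin.forall_fin_two, hu, hv])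

theorem Matrix.mul_eq_self_of_range_le {R k l : Type*} [CommRing R] [Fintype k] [Fintype l]
    {P : Matrix k k R} {M : Matrix k l R} (hP : IsIdempotentElem P)
    (h : LinearMap.range M.mulVecLin ≤ LinearMap.range P.mulVecLin) : P * M = M := by
  refine mulVec_injective (funext fun x => ?_)
  obtain ⟨y, hy : P *ᵥ y = M *ᵥ x⟩ := h ⟨x, rfl⟩
  rw [← mulVec_mulVec, ← hy, mulVec_mulVec, hP.eq]

section Projection

variable {k : Type*} [Fintype k] {P : Matrix k k ℝ}

theorem mulVec_dotProduct_mulVec_of_isSymm (hP : IsIdempotentElem P) (hPs : P.IsSymm)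
    (x : k → ℝ) :
    (P *ᵥ x) ⬝ᵥ (P *ᵥ x) = x ⬝ᵥ (P *ᵥ x) := by
  rw [dotProduct_mulVec, ← mulVec_transpose, hPs.eq, mulVec_mulVec, hP.eq, dotProduct_comm]

theorem sum_sq_mulVec_add_sum_sq_one_sub_mulVec [DecidableEq k] (hP : IsIdempotentElem P)
    (hPs : P.IsSymm) (x : k → ℝ) :
    ∑ i, (P *ᵥ x) i ^ 2 + ∑ i, ((1 - P) *ᵥ x) i ^ 2 = ∑ i, x i ^ 2 := by
  have hsq (v : k → ℝ) : ∑ i, v i ^ 2 = v ⬝ᵥ v := by simp [dotProduct, sq]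
  rw [hsq, hsq, hsq, mulVec_dotProduct_mulVec_of_isSymm hP hPs,
    mulVec_dotProduct_mulVec_of_isSymm hP.one_sub (isSymm_one.sub hPs), ← dotProduct_add,
    ← add_mulVec, add_sub_cancel, one_mulVec]

end Projection

section NuclearNorm

variable {m n : Type*} [Fintype m]

theorem exists_eq_sum_vecMulVec (A : Matrix m n ℝ) :
    ∃ (R : ℕ) (a : Fin R → m → ℝ) (b : Fin R → n → ℝ), A = ∑ r, vecMulVec (a r) (b r) := by
  classical
  let e := (Fintype.equivFin m).symm
  refine ⟨_, fun r => Pi.single (e r) 1, fun r => A (e r), ?_⟩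
  rw [e.sum_comp fun i => vecMulVec (Pi.single i 1) fun j => A i j]
  ext i j
  simp [Matrix.sum_apply, vecMulVec_apply, Pi.single_apply]

variable [Fintype n]

theorem nuclearNorm_le_of_eq_sum {A : Matrix m n ℝ} {R : ℕ} (a : Fin R → m → ℝ)
    (b : Fin R → n → ℝ) (hA : A = ∑ r, vecMulVec (a r) (b r)) :
    nuclearNorm A ≤ ∑ r, √(∑ i, a r i ^ 2) * √(∑ j, b r j ^ 2) :=
  csInf_le ⟨0, by
    rintro _ ⟨R, a, b, -, rfl⟩
    exact Finset.sum_nonneg fun r _ => by positivity⟩ ⟨R, a, b, hA, rfl⟩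

theorem le_nuclearNorm {A : Matrix m n ℝ} {c : ℝ}
    (h : ∀ (R : ℕ) (a : Fin R → m → ℝ) (b : Fin R → n → ℝ), A = ∑ r, vecMulVec (a r) (b r) →
      c ≤ ∑ r, √(∑ i, a r i ^ 2) * √(∑ j, b r j ^ 2)) :
    c ≤ nuclearNorm A := by
  obtain ⟨R, a, b, hA⟩ := exists_eq_sum_vecMulVec A
  refine le_csInf ⟨_, R, a, b, hA, rfl⟩ ?_
  rintro _ ⟨R, a, b, hA, rfl⟩
  exact h R a b hA

theorem nuclearNorm_add_le (A B : Matrix m n ℝ) :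
    nuclearNorm (A + B) ≤ nuclearNorm A + nuclearNorm B := by
  suffices nuclearNorm (A + B) - nuclearNorm B ≤ nuclearNorm A by linarith
  refine le_nuclearNorm fun R a b hA => ?_
  suffices nuclearNorm (A + B) - ∑ r, √(∑ i, a r i ^ 2) * √(∑ j, b r j ^ 2) ≤ nuclearNorm B by
    linarith
  refine le_nuclearNorm fun R' a' b' hB => ?_
  have := nuclearNorm_le_of_eq_sum (A := A + B) (Fin.append a a') (Fin.append b b') (by
    simp only [Fin.sum_univ_add, Fin.append_left, Fin.append_right, hA, hB])
  simp only [Fin.sum_univ_add, Fin.append_left, Fin.append_right] at this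
  linarith

theorem nuclearNorm_neg_le (A : Matrix m n ℝ) : nuclearNorm (-A) ≤ nuclearNorm A :=
  le_nuclearNorm fun R a b hA => by
    simpa using nuclearNorm_le_of_eq_sum (fun r => -a r) b (by simp [hA])

@[simp]
theorem nuclearNorm_neg (A : Matrix m n ℝ) : nuclearNorm (-A) = nuclearNorm A :=
  (nuclearNorm_neg_le A).antisymm (by simpa using nuclearNorm_neg_le (-A))

theorem nuclearNorm_pinching [DecidableEq m] [DecidableEq n] {P : Matrix m m ℝ}
    {Q : Matrix n n ℝ} (hP : IsIdempotentElem P) (hPs : P.IsSymm) (hQ : IsIdempotentElem Q)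
    (hQs : Q.IsSymm) (M : Matrix m n ℝ) :
    nuclearNorm (P * M * Q) + nuclearNorm ((1 - P) * M * (1 - Q)) ≤ nuclearNorm M := by
  refine le_nuclearNorm fun R a b hM => ?_
  have hcompress (P : Matrix m m ℝ) (Q : Matrix n n ℝ) (hQs : Q.IsSymm) :
      P * M * Q = ∑ r, vecMulVec (P *ᵥ a r) (Q *ᵥ b r) := by
    simp only [hM, Matrix.mul_sum, Matrix.sum_mul, mul_vecMulVec, vecMulVec_mul,
      ← mulVec_transpose, hQs.eq]
  refine (add_le_add (nuclearNorm_le_of_eq_sum _ _ (hcompress P Q hQs))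
    (nuclearNorm_le_of_eq_sum _ _ (hcompress (1 - P) (1 - Q) (isSymm_one.sub hQs)))).trans ?_
  rw [← Finset.sum_add_distrib]
  refine Finset.sum_le_sum fun r _ => ?_
  rw [← sum_sq_mulVec_add_sum_sq_one_sub_mulVec hP hPs (a r),
    ← sum_sq_mulVec_add_sum_sq_one_sub_mulVec hQ hQs (b r)]
  exact Real.sqrt_mul_sqrt_add_sqrt_mul_sqrt_le (by positivity) (by positivity) (by positivity)
    (by positivity)

theorem nuclearNorm_add_nuclearNorm_le_of_orthogonal [DecidableEq m] [DecidableEq n]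
    {P : Matrix m m ℝ} {Q : Matrix n n ℝ} (hP : IsIdempotentElem P) (hPs : P.IsSymm)
    (hQ : IsIdempotentElem Q) (hQs : Q.IsSymm) {A B : Matrix m n ℝ} (hPA : P * A = A)
    (hAQ : A * Q = A) (hPB : P * B = 0) (hBQ : B * Q = 0) :
    nuclearNorm A + nuclearNorm B ≤ nuclearNorm (A + B) := by
  have hP_add : P * (A + B) = A := by rw [Matrix.mul_add, hPA, hPB, add_zero]
  have h_addQ : (A + B) * Q = A := by rw [Matrix.add_mul, hAQ, hBQ, add_zero]
  have hcompress : P * (A + B) * Q = A := by rw [hP_add, hAQ]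
  have hcompress' : (1 - P) * (A + B) * (1 - Q) = B := by
    rw [Matrix.sub_mul, Matrix.one_mul, Matrix.mul_sub, Matrix.mul_one, Matrix.sub_mul, hP_add,
      h_addQ, hAQ]
    abel
  simpa only [hcompress, hcompress'] using nuclearNorm_pinching hP hPs hQ hQs (A + B)

end NuclearNorm

/-- with Δ = M̂ − M_p, Δ'' = (I−P_U)Δ(I−P_V), Δ' = Δ − Δ'' where
P_U, P_V are the orthogonal projections onto the column and row spaces of M_p,
one has ‖M̂‖* ≥ ‖M_p‖* + ‖Δ''‖* − ‖Δ'‖*. -/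
theorem stmt8 {n m : ℕ}
    (Mp Mhat : Matrix (Fin n) (Fin m) ℝ)
    (PU : Matrix (Fin n) (Fin n) ℝ) (PV : Matrix (Fin m) (Fin m) ℝ)
    (hPUproj : PU * PU = PU) (hPUsym : PUᵀ = PU)
    (hPUrange : LinearMap.range PU.mulVecLin = LinearMap.range Mp.mulVecLin)
    (hPVproj : PV * PV = PV) (hPVsym : PVᵀ = PV)
    (hPVrange : LinearMap.range PV.mulVecLin = LinearMap.range Mpᵀ.mulVecLin)
    (Δ Δ' Δ'' : Matrix (Fin n) (Fin m) ℝ)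
    (hΔ : Δ = Mhat - Mp)
    (hΔ'' : Δ'' = (1 - PU) * Δ * (1 - PV))
    (hΔ' : Δ' = Δ - Δ'') :
    nuclearNorm Mhat ≥ nuclearNorm Mp + nuclearNorm Δ'' - nuclearNorm Δ' := by
  have hUMp : PU * Mp = Mp := mul_eq_self_of_range_le hPUproj hPUrange.ge
  have hMpV : Mp * PV = Mp := by
    simpa [transpose_mul, hPVsym] using
      congrArg transpose (mul_eq_self_of_range_le hPVproj hPVrange.ge)
  have hUΔ'' : PU * Δ'' = 0 := by
    rw [hΔ'', ← Matrix.mul_assoc, ← Matrix.mul_assoc, IsIdempotentElem.mul_one_sub_self hPUproj,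
      Matrix.zero_mul, Matrix.zero_mul]
  have hΔ''V : Δ'' * PV = 0 := by
    rw [hΔ'', Matrix.mul_assoc, IsIdempotentElem.one_sub_mul_self hPVproj, Matrix.mul_zero]
  have hsuperadd := nuclearNorm_add_nuclearNorm_le_of_orthogonal hPUproj hPUsym hPVproj hPVsym
    hUMp hMpV hUΔ'' hΔ''V
  have hsum : Mhat + -Δ' = Mp + Δ'' := by rw [hΔ', hΔ]; abel
  have htri := nuclearNorm_add_le Mhat (-Δ')
  rw [hsum, nuclearNorm_neg] at htri
  linarith
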